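/- For each k ∈ ℕ, let v^k be a transferable-utility coalitional game on I = {1,…,N} with nonempty core C(v^k) ≠ ∅, and let M^k : (ℝ^N)^N → (ℝ^N)^N be Lipschitz continuous with a constant L_k ∈ (0,1); set L̄ = sup_k L_k and assume L̄ < 1. Suppose the (unique) fixed point x̄^k of M^k lies in A ∩ (C(v^k))^N, i.e. x̄^k = (c^k,…,c^k) with c^k ∈ C(v^k), and that ‖x̄^{k+1} − x̄^k‖ ≤ δ for all k, where δ ≥ 0. Then for any x^0 ∈ (ℝ^N)^N, the iterates x^{k+1} = M^k(x^k) satisfy ‖x^k − x̄^k‖ ≤ (∏_{i=0}^{k−1} L_i)‖x^0 − x̄^0‖ + δ(1 − L̄^k)/(1 − L̄) for all k ≥ 1, and consequently limsup_{k→∞} dist(x^k, A ∩ (C(v^k))^N) ≤ δ/(1 − L̄). -/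

import Mathlib

/-- The stacked space `(ℝ^N)^N` with the Euclidean norm `‖x‖² = Σ_i ‖x_i‖²`. -/
abbrev Blk (N : ℕ) := PiLp 2 (fun _ : Fin N => EuclideanSpace ℝ (Fin N))

/-- The core of a TU coalitional game `v` on `I = {1,…,N}`:
`C(v) = {x : Σ_i x_i = v(I), Σ_{i∈S} x_i ≥ v(S) for every nonempty S ⊆ I}`. -/
def core {N : ℕ} (v : Finset (Fin N) → ℝ) : Set (EuclideanSpace ℝ (Fin N)) :=
  {x | ∑ i, x i = v Finset.univ ∧
    ∀ S : Finset (Fin N), S.Nonempty → v S ≤ ∑ i ∈ S, x i}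

/-!
The error `eₖ = ‖xᵏ - x̄ᵏ‖` obeys `eₖ₊₁ ≤ Lₖ eₖ + δ`: one step of the contraction `Mᵏ` shrinks
the distance to its fixed point `x̄ᵏ` by `Lₖ`, and the fixed point then moves by at most `δ`.
Unrolling this recursion and bounding every `Lᵢ` by `L̄` in the drift terms gives the
geometric bound. Since `x̄ᵏ` is itself a consensus core allocation, the distance to
`A ∩ C(vᵏ)ᴺ` is at most `eₖ ≤ L̄ᵏ e₀ + δ/(1 - L̄)`, whose limit is `δ/(1 - L̄)`.
-/

open Filter Finset Topology

theorem const_mem_consensus_inter_pi {p : ENNReal} {ι E : Type*} {s : Set E} {c : E}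
    (hc : c ∈ s) :
    (WithLp.equiv p (ι → E)).symm (fun _ => c) ∈
      {y : PiLp p (fun _ : ι => E) | ∀ i j, y i = y j} ∩ {y | ∀ i, y i ∈ s} :=
  ⟨fun _ _ => rfl, fun _ => hc⟩

theorem norm_map_sub_le_of_isFixedPt {E : Type*} [SeminormedAddCommGroup E] {M : E → E}
    {K δ : ℝ} (hM : ∀ x y, ‖M x - M y‖ ≤ K * ‖x - y‖) {p q : E} (hp : Function.IsFixedPt M p)
    (hpq : ‖q - p‖ ≤ δ) (x : E) :
    ‖M x - q‖ ≤ K * ‖x - p‖ + δ :=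
  calc ‖M x - q‖ ≤ ‖M x - M p‖ + ‖q - p‖ := by
        rw [hp.eq, norm_sub_rev q p]; exact norm_sub_le_norm_sub_add_norm_sub _ _ _
    _ ≤ K * ‖x - p‖ + δ := add_le_add (hM x p) hpq

theorem le_prod_mul_add_mul_geom_sum {K : Type*} [Field K] [LinearOrder K] [IsStrictOrderedRing K]
    {e L : ℕ → K} {Lbar δ : K} (hL0 : ∀ k, 0 ≤ L k)
    (hL : ∀ k, L k ≤ Lbar) (hδ : 0 ≤ δ) (he : ∀ k, e (k + 1) ≤ L k * e k + δ) (k : ℕ) :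
    e k ≤ (∏ i ∈ range k, L i) * e 0 + δ * ∑ i ∈ range k, Lbar ^ i := by
  induction k with
  | zero => simp
  | succ k ih =>
    have hdrift : 0 ≤ δ * ∑ i ∈ range k, Lbar ^ i :=
      mul_nonneg hδ (sum_nonneg fun i _ => pow_nonneg ((hL0 0).trans (hL 0)) i)
    calc e (k + 1) ≤ L k * e k + δ := he k
      _ ≤ L k * ((∏ i ∈ range k, L i) * e 0 + δ * ∑ i ∈ range k, Lbar ^ i) + δ := by
        gcongr; exact hL0 k
      _ ≤ (∏ i ∈ range (k + 1), L i) * e 0 + δ * ∑ i ∈ range (k + 1), Lbar ^ i := by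
        rw [prod_range_succ, geom_sum_succ]
        nlinarith [mul_le_mul_of_nonneg_right (hL k) hdrift]

theorem mul_geom_sum_eq_div {K : Type*} [DivisionRing K] {x : K} (hx : x ≠ 1) (δ : K) (k : ℕ) :
    δ * ∑ i ∈ range k, x ^ i = δ * (1 - x ^ k) / (1 - x) := by
  rw [range_eq_Ico, geom_sum_Ico' hx k.zero_le, pow_zero, mul_div_assoc]

theorem limsup_le_of_le_of_tendsto {α β : Type*} [ConditionallyCompleteLinearOrder β]
    [TopologicalSpace β] [OrderTopology β] {l : Filter α} [l.NeBot] {u v : α → β} {a : β}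
    (hu : IsBoundedUnder (· ≥ ·) l u) (huv : u ≤ᶠ[l] v) (hv : Tendsto v l (𝓝 a)) :
    limsup u l ≤ a :=
  hv.limsup_eq ▸ limsup_le_limsup huv hu.isCoboundedUnder_le hv.isBoundedUnder_le

theorem stmt_14_general (N : ℕ)
    (v : ℕ → Finset (Fin N) → ℝ)
    (M : ℕ → Blk N → Blk N) (L : ℕ → ℝ) (hL : ∀ k, 0 < L k ∧ L k < 1)
    (hLip : ∀ k x y, ‖M k x - M k y‖ ≤ L k * ‖x - y‖)
    (Lbar : ℝ) (hLbar : IsLUB (Set.range L) Lbar) (hLbar1 : Lbar < 1)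
    (c : ℕ → EuclideanSpace ℝ (Fin N)) (hc : ∀ k, c k ∈ core (v k))
    (xbar : ℕ → Blk N)
    (hxbar : ∀ k, xbar k =
      (WithLp.equiv 2 ((_ : Fin N) → EuclideanSpace ℝ (Fin N))).symm fun _ => c k)
    (hfix : ∀ k, M k (xbar k) = xbar k)
    (δ : ℝ) (hδ : 0 ≤ δ) (hdrift : ∀ k, ‖xbar (k + 1) - xbar k‖ ≤ δ)
    (x : ℕ → Blk N) (hx : ∀ k, x (k + 1) = M k (x k)) :
    (∀ k, 1 ≤ k →
      ‖x k - xbar k‖ ≤ (∏ i ∈ Finset.range k, L i) * ‖x 0 - xbar 0‖ +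
        δ * (1 - Lbar ^ k) / (1 - Lbar)) ∧
    Filter.atTop.limsup (fun k => Metric.infDist (x k)
        ({y : Blk N | ∀ i j, y i = y j} ∩ {y : Blk N | ∀ i, y i ∈ core (v k)})) ≤
      δ / (1 - Lbar) := by
  have hL0 k : 0 ≤ L k := (hL k).1.le
  have hLLbar k : L k ≤ Lbar := hLbar.1 ⟨k, rfl⟩
  have hLbar0 : 0 ≤ Lbar := (hL0 0).trans (hLLbar 0)
  have hbound k : ‖x k - xbar k‖ ≤ (∏ i ∈ range k, L i) * ‖x 0 - xbar 0‖ +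
      δ * (1 - Lbar ^ k) / (1 - Lbar) := by
    rw [← mul_geom_sum_eq_div hLbar1.ne]
    refine le_prod_mul_add_mul_geom_sum (e := fun k => ‖x k - xbar k‖) hL0 hLLbar hδ (fun j => ?_) k
    rw [hx j]
    exact norm_map_sub_le_of_isFixedPt (hLip j) (hfix j) (hdrift j) (x j)
  refine ⟨fun k _ => hbound k, limsup_le_of_le_of_tendsto
    (v := fun k => Lbar ^ k * ‖x 0 - xbar 0‖ + δ / (1 - Lbar))
    (isBoundedUnder_of_eventually_ge (.of_forall fun _ => Metric.infDist_nonneg))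
    (.of_forall fun k => ?_) ?_⟩
  · have hprod : ∏ i ∈ range k, L i ≤ Lbar ^ k := by
      simpa using prod_le_prod (fun i _ => hL0 i) (fun i _ => hLLbar i) (s := range k)
    have hgeom : δ * (1 - Lbar ^ k) / (1 - Lbar) ≤ δ / (1 - Lbar) :=
      div_le_div_of_nonneg_right (mul_le_of_le_one_right hδ (sub_le_self _ (pow_nonneg hLbar0 k)))
        (sub_nonneg.2 hLbar1.le)
    calc _ ≤ ‖x k - xbar k‖ := by
          rw [← dist_eq_norm, hxbar k]
          exact Metric.infDist_le_dist_of_mem (const_mem_consensus_inter_pi (hc k))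
      _ ≤ _ := (hbound k).trans
        (add_le_add (mul_le_mul_of_nonneg_right hprod (norm_nonneg _)) hgeom)
  · simpa using ((tendsto_pow_atTop_nhds_zero_of_lt_one hLbar0 hLbar1).mul_const
      ‖x 0 - xbar 0‖).add_const (δ / (1 - Lbar))

/-- online core tracking: iterates of the contractions `M^k`, whose fixed
points are consensus core allocations drifting by at most `δ`, satisfy the per-step bound
and `limsup dist(x^k, A ∩ C(v^k)^N) ≤ δ/(1 − L̄)`. -/
theorem stmt_14 (N : ℕ) (hN : 0 < N)
    (v : ℕ → Finset (Fin N) → ℝ) (hv : ∀ k, v k ∅ = 0)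
    (hcore : ∀ k, (core (v k)).Nonempty)
    (M : ℕ → Blk N → Blk N) (L : ℕ → ℝ) (hL : ∀ k, 0 < L k ∧ L k < 1)
    (hLip : ∀ k x y, ‖M k x - M k y‖ ≤ L k * ‖x - y‖)
    (Lbar : ℝ) (hLbar : IsLUB (Set.range L) Lbar) (hLbar1 : Lbar < 1)
    (c : ℕ → EuclideanSpace ℝ (Fin N)) (hc : ∀ k, c k ∈ core (v k))
    (xbar : ℕ → Blk N)
    (hxbar : ∀ k, xbar k =
      (WithLp.equiv 2 ((_ : Fin N) → EuclideanSpace ℝ (Fin N))).symm fun _ => c k)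
    (hfix : ∀ k, M k (xbar k) = xbar k)
    (hfixuniq : ∀ k y, M k y = y → y = xbar k)
    (δ : ℝ) (hδ : 0 ≤ δ) (hdrift : ∀ k, ‖xbar (k + 1) - xbar k‖ ≤ δ)
    (x : ℕ → Blk N) (hx : ∀ k, x (k + 1) = M k (x k)) :
    (∀ k, 1 ≤ k →
      ‖x k - xbar k‖ ≤ (∏ i ∈ Finset.range k, L i) * ‖x 0 - xbar 0‖ +
        δ * (1 - Lbar ^ k) / (1 - Lbar)) ∧
    Filter.atTop.limsup (fun k => Metric.infDist (x k)
        ({y : Blk N | ∀ i j, y i = y j} ∩ {y : Blk N | ∀ i, y i ∈ core (v k)})) ≤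
      δ / (1 - Lbar) :=
  stmt_14_general N v M L hL hLip Lbar hLbar hLbar1 c hc xbar hxbar hfix δ hδ hdrift x hx
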